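/- arXiv:2206.10019 — 3 statements merged into one kernel-verified Lean document; each statement's English description precedes it below -/
import Mathlib

section
/- If û ∈ ℝ^n is a global minimizer of the TV-minimization objective f(u) = ∑_{i∈S} (1−u_i)²/2 + ∑_{i∉S} (α/2) u_i² + λ‖u‖_TV, then there exists a flow vector φ ∈ ℝ^{E⃗} such that div_i(φ) = û_i − 1 for every i ∈ S, div_i(φ) = α·û_i for every i ∉ S, |φ_{(i,i')}| ≤ λ·A_{ii'} for every oriented edge (i,i') ∈ E⃗, and û_i = û_{i'} for every oriented edge (i,i') ∈ E⃗ with |φ_{(i,i')}| < λ·A_{ii'}. -/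
open Finset
open scoped Classical

/-- Total variation of `u` on the weighted graph with symmetric weight matrix `A`:
each undirected edge `{i,i'}` (i.e. `A i i' > 0`) is counted once, via its
orientation `i < i'`. -/
noncomputable def graphTV {n : ℕ} (A : Fin n → Fin n → ℝ) (u : Fin n → ℝ) : ℝ :=
  ∑ i : Fin n, ∑ j : Fin n, if i < j ∧ 0 < A i j then A i j * |u i - u j| else 0

/-- The TV-minimization objective
`f(u) = ∑_{i∈S} (1−u_i)²/2 + ∑_{i∉S} (α/2) u_i² + λ‖u‖_TV`. -/
noncomputable def tvObj {n : ℕ} (A : Fin n → Fin n → ℝ) (S : Finset (Fin n))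
    (lam alpha : ℝ) (u : Fin n → ℝ) : ℝ :=
  (∑ i ∈ S, (1 - u i) ^ 2 / 2) + (∑ i ∈ Sᶜ, alpha / 2 * u i ^ 2) + lam * graphTV A u

/-- Divergence of a flow vector `phi` (defined on the oriented edges `(i,j)`, `i < j`,
`A i j > 0`) at node `i`: outgoing flow is subtracted, incoming flow is added. -/
noncomputable def flowDiv {n : ℕ} (A : Fin n → Fin n → ℝ) (phi : Fin n → Fin n → ℝ)
    (i : Fin n) : ℝ :=
  -(∑ j ∈ Finset.univ.filter (fun j => i < j ∧ 0 < A i j), phi i j)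
    + ∑ j ∈ Finset.univ.filter (fun j => j < i ∧ 0 < A j i), phi j i


noncomputable def sg (x : ℝ) : ℝ := if 0 < x then 1 else -1

lemma sg_mul_self (y : ℝ) : sg y * y = |y| := by
  unfold sg
  rcases lt_trichotomy 0 y with h | h | h
  · rw [if_pos h, one_mul, abs_of_pos h]
  · simp [← h]
  · rw [if_neg (by linarith), abs_of_neg h]; ring

lemma abs_sg (x : ℝ) : |sg x| = 1 := by
  unfold sg; split <;> simp

lemma abs_expansion (x y t : ℝ) (ht : 0 ≤ t) (h : x = 0 ∨ t * |y| ≤ |x|) :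
    |x + t * y| = |x| + t * (if x = 0 then |y| else sg x * y) := by
  rcases eq_or_ne x 0 with hx | hx
  · subst hx; simp [abs_mul, abs_of_nonneg ht]
  · rw [if_neg hx]
    rcases h with h | h
    · exact absurd h hx
    rcases lt_trichotomy 0 x with hx' | hx' | hx'
    · have h1 : |x| = x := abs_of_pos hx'
      have h2 : -(t * |y|) ≤ t * y := by nlinarith [neg_abs_le y, abs_nonneg y]
      rw [abs_of_nonneg (by rw [h1] at h; linarith), h1]
      unfold sg; rw [if_pos hx']; ring
    · exact absurd hx'.symm hx
    · have h1 : |x| = -x := abs_of_neg hx'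
      have h2 : t * y ≤ t * |y| := by nlinarith [le_abs_self y]
      rw [abs_of_nonpos (by rw [h1] at h; linarith), h1]
      unfold sg; rw [if_neg (by linarith)]; ring

lemma sum_mul_flowDiv {n : ℕ} (A : Fin n → Fin n → ℝ) (ψ : Fin n → Fin n → ℝ)
    (r : Fin n → ℝ) :
    ∑ i, r i * flowDiv A ψ i
      = ∑ i : Fin n, ∑ j : Fin n,
          (if i < j ∧ 0 < A i j then ψ i j * (r j - r i) else 0) := by
  unfold flowDiv
  have h1 : ∀ i : Fin n,
      r i * (-(∑ j ∈ Finset.univ.filter (fun j => i < j ∧ 0 < A i j), ψ i j)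
        + ∑ j ∈ Finset.univ.filter (fun j => j < i ∧ 0 < A j i), ψ j i)
      = (∑ j : Fin n, (if j < i ∧ 0 < A j i then r i * ψ j i else 0))
        - ∑ j : Fin n, (if i < j ∧ 0 < A i j then r i * ψ i j else 0) := by
    intro i
    rw [Finset.sum_filter, Finset.sum_filter]
    simp only [mul_add, mul_neg, Finset.mul_sum, mul_ite, mul_zero]
    ring
  rw [Finset.sum_congr rfl (fun i _ => h1 i), Finset.sum_sub_distrib, Finset.sum_comm]
  have h2 : ∀ i : Fin n, ∀ j : Fin n,
      (if i < j ∧ 0 < A i j then ψ i j * (r j - r i) else 0)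
      = (if i < j ∧ 0 < A i j then r j * ψ i j else 0)
        - (if i < j ∧ 0 < A i j then r i * ψ i j else 0) := by
    intro i j; split <;> ring
  rw [Finset.sum_congr rfl (fun i _ => Finset.sum_congr rfl (fun j _ => h2 i j))]
  simp only [Finset.sum_sub_distrib]

lemma flowDiv_line {n : ℕ} (A φ ψ : Fin n → Fin n → ℝ) (s : ℝ) (i : Fin n) :
    flowDiv A (fun a b => φ a b + s * (ψ a b - φ a b)) i
      = flowDiv A φ i + s * (flowDiv A ψ i - flowDiv A φ i) := by
  unfold flowDiv
  simp only [Finset.sum_add_distrib, ← Finset.mul_sum, Finset.sum_sub_distrib]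
  ring


set_option maxHeartbeats 1600000 in
/-- if `û` is a global minimizer of the TV-minimization objective, then
there exists a flow vector `φ` satisfying the divergence constraints at seed and
non-seed nodes, the capacity constraints, and equality of `û` across non-saturated
edges. -/
theorem tv_min_exists_flow {n : ℕ} (A : Fin n → Fin n → ℝ)
    (hAsymm : ∀ i j, A i j = A j i) (hAnonneg : ∀ i j, 0 ≤ A i j)
    (hAdiag : ∀ i, A i i = 0) (S : Finset (Fin n))
    (lam alpha : ℝ) (hlam : 0 < lam) (halpha : 0 < alpha) (uhat : Fin n → ℝ)
    (hmin : ∀ v : Fin n → ℝ, tvObj A S lam alpha uhat ≤ tvObj A S lam alpha v) :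
    ∃ phi : Fin n → Fin n → ℝ,
      (∀ i ∈ S, flowDiv A phi i = uhat i - 1) ∧
      (∀ i ∉ S, flowDiv A phi i = alpha * uhat i) ∧
      (∀ i j : Fin n, i < j → 0 < A i j → |phi i j| ≤ lam * A i j) ∧
      (∀ i j : Fin n, i < j → 0 < A i j → |phi i j| < lam * A i j →
        uhat i = uhat j) := by
  classical
  set c : Fin n → ℝ := fun i => if i ∈ S then uhat i - 1 else alpha * uhat i with hc_def
  set lo : Fin n → Fin n → ℝ := fun i j =>
    if i < j ∧ 0 < A i j then
      (if uhat i - uhat j = 0 then -(lam * A i j) else lam * A i j * sg (uhat i - uhat j))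
    else 0 with hlo_def
  set hi : Fin n → Fin n → ℝ := fun i j =>
    if i < j ∧ 0 < A i j then
      (if uhat i - uhat j = 0 then lam * A i j else lam * A i j * sg (uhat i - uhat j))
    else 0 with hhi_def
  set K : Set (Fin n → Fin n → ℝ) :=
    Set.univ.pi fun i => Set.univ.pi fun j => Set.Icc (lo i j) (hi i j) with hK_def
  have hKmem : ∀ ψ : Fin n → Fin n → ℝ,
      ψ ∈ K ↔ ∀ i j, lo i j ≤ ψ i j ∧ ψ i j ≤ hi i j := by
    intro ψ
    constructor
    · intro h i j
      exact (h i (Set.mem_univ i) j (Set.mem_univ j) : _)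
    · intro h i _ j _
      exact h i j
  have hlohi : ∀ i j, lo i j ≤ hi i j := by
    intro i j
    simp only [hlo_def, hhi_def]
    split
    · rename_i h
      split
      · nlinarith [h.2]
      · exact le_rfl
    · exact le_rfl
  have hKcpt : IsCompact K := by
    rw [hK_def]
    exact isCompact_univ_pi fun i => isCompact_univ_pi fun j => isCompact_Icc
  have hKconv : Convex ℝ K := by
    rw [hK_def]
    exact convex_pi fun i _ => convex_pi fun j _ => convex_Icc _ _
  have hKne : K.Nonempty := ⟨lo, (hKmem lo).2 fun i j => ⟨le_rfl, hlohi i j⟩⟩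
  set F : (Fin n → Fin n → ℝ) → ℝ := fun ψ => ∑ i, (flowDiv A ψ i - c i) ^ 2 with hF_def
  have hFcont : Continuous F := by
    rw [hF_def]
    apply continuous_finset_sum
    intro i _
    have h1 : Continuous fun ψ : Fin n → Fin n → ℝ => flowDiv A ψ i := by
      unfold flowDiv
      exact ((continuous_finset_sum _ fun j _ =>
          (continuous_apply j).comp (continuous_apply i)).neg).add
        (continuous_finset_sum _ fun j _ =>
          (continuous_apply i).comp (continuous_apply j))
    exact (h1.sub continuous_const).pow 2
  obtain ⟨φ, hφK, hφmin⟩ := hKcpt.exists_isMinOn hKne hFcont.continuousOn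
  have hforced : ∀ i j, i < j → 0 < A i j → uhat i - uhat j ≠ 0 →
      φ i j = lam * A i j * sg (uhat i - uhat j) := by
    intro i j hij hA hx
    have h := (hKmem φ).1 hφK i j
    simp only [hlo_def, hhi_def, if_pos (⟨hij, hA⟩ : i < j ∧ 0 < A i j), if_neg hx] at h
    linarith [h.1, h.2]
  have hcap : ∀ i j, i < j → 0 < A i j → |φ i j| ≤ lam * A i j := by
    intro i j hij hA
    have h := (hKmem φ).1 hφK i j
    simp only [hlo_def, hhi_def, if_pos (⟨hij, hA⟩ : i < j ∧ 0 < A i j)] at h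
    by_cases hx : uhat i - uhat j = 0
    · rw [if_pos hx, if_pos hx] at h
      exact abs_le.2 ⟨by linarith [h.1], h.2⟩
    · rw [if_neg hx, if_neg hx] at h
      have heq : φ i j = lam * A i j * sg (uhat i - uhat j) := le_antisymm h.2 h.1
      exact le_of_eq (by rw [heq, abs_mul, abs_sg, mul_one, abs_of_nonneg (by positivity)])
  have hVI : ∀ ψ ∈ K,
      0 ≤ ∑ i, (flowDiv A φ i - c i) * (flowDiv A ψ i - flowDiv A φ i) := by
    intro ψ hψ
    by_contra hneg
    push_neg at hneg
    set a := ∑ i, (flowDiv A φ i - c i) * (flowDiv A ψ i - flowDiv A φ i) with ha_def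
    set b := ∑ i, (flowDiv A ψ i - flowDiv A φ i) ^ 2 with hb_def
    have hbnn : 0 ≤ b := by
      rw [hb_def]; exact Finset.sum_nonneg fun i _ => sq_nonneg _
    set s := min 1 ((-a) / (b + 1)) with hs_def
    have hs0 : 0 < s := lt_min one_pos (div_pos (by linarith) (by linarith))
    have hs1 : s ≤ 1 := min_le_left _ _
    have hχK : (fun i j => φ i j + s * (ψ i j - φ i j)) ∈ K := by
      have h := hKconv hφK hψ (by linarith : (0:ℝ) ≤ 1 - s) hs0.le (by ring)
      have heq : (fun i j => φ i j + s * (ψ i j - φ i j)) = (1 - s) • φ + s • ψ := by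
        funext i j
        simp only [Pi.add_apply, Pi.smul_apply, smul_eq_mul]
        ring
      rw [heq]; exact h
    have hle : F φ ≤ F (fun i j => φ i j + s * (ψ i j - φ i j)) :=
      isMinOn_iff.mp hφmin _ hχK
    have hFχ : F (fun i j => φ i j + s * (ψ i j - φ i j)) = F φ + 2 * a * s + b * s ^ 2 := by
      rw [hF_def]
      simp only [flowDiv_line]
      have hterm : ∀ i : Fin n,
          (flowDiv A φ i + s * (flowDiv A ψ i - flowDiv A φ i) - c i) ^ 2
          = (flowDiv A φ i - c i) ^ 2
            + (2 * ((flowDiv A φ i - c i) * (flowDiv A ψ i - flowDiv A φ i))) * s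
            + ((flowDiv A ψ i - flowDiv A φ i) ^ 2) * s ^ 2 := fun i => by ring
      rw [Finset.sum_congr rfl fun i _ => hterm i, Finset.sum_add_distrib,
        Finset.sum_add_distrib, ← Finset.sum_mul, ← Finset.sum_mul, ← Finset.mul_sum,
        ← ha_def, ← hb_def]
    rw [hFχ] at hle
    have hsle : s ≤ (-a) / (b + 1) := min_le_right _ _
    have h1 : b * s ≤ -a := by
      have h2 : b * s ≤ b * ((-a) / (b + 1)) := mul_le_mul_of_nonneg_left hsle hbnn
      have h3 : b * ((-a) / (b + 1)) ≤ -a := by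
        rw [mul_div_assoc']
        rw [div_le_iff₀ (by linarith : (0:ℝ) < b + 1)]
        nlinarith
      linarith
    have h4 : b * s ^ 2 ≤ -(a * s) := by nlinarith [mul_le_mul_of_nonneg_right h1 hs0.le]
    have h5 : a * s < 0 := mul_neg_of_neg_of_pos hneg hs0
    linarith
  -- the residual is zero
  have hzero : ∀ i, flowDiv A φ i = c i := by
    have hnn : 0 ≤ ∑ i, (flowDiv A φ i - c i) ^ 2 :=
      Finset.sum_nonneg fun i _ => sq_nonneg _
    have hle : ∑ i, (flowDiv A φ i - c i) ^ 2 ≤ 0 := by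
      by_contra hpos0
      push_neg at hpos0
      set r : Fin n → ℝ := fun i => flowDiv A φ i - c i with hr_def
      set R : ℝ := ∑ i, r i ^ 2 with hR_def
      have hpos : 0 < R := by
        rw [hR_def]; simp only [hr_def]; exact hpos0
      obtain ⟨i₀, hi₀⟩ : ∃ i, r i ≠ 0 := by
        by_contra hall
        push_neg at hall
        have : R = 0 := by
          rw [hR_def]; exact Finset.sum_eq_zero fun i _ => by rw [hall i]; ring
        linarith
      have hne' : (Finset.univ : Finset (Fin n × Fin n)).Nonempty := ⟨(i₀, i₀), mem_univ _⟩
      set TVd : ℝ := ∑ i : Fin n, ∑ j : Fin n,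
          (if i < j ∧ 0 < A i j then
            A i j * (if uhat i - uhat j = 0 then |r i - r j|
              else sg (uhat i - uhat j) * (r i - r j))
          else 0) with hTVd_def
      set ψ : Fin n → Fin n → ℝ := fun i j =>
          if i < j ∧ 0 < A i j ∧ uhat i - uhat j = 0 then lam * A i j * sg (r i - r j)
          else φ i j with hψ_def
      have hψK : ψ ∈ K := by
        refine (hKmem ψ).2 fun i j => ?_
        by_cases hcond : i < j ∧ 0 < A i j ∧ uhat i - uhat j = 0
        · have hij := hcond.1; have hA := hcond.2.1; have hx := hcond.2.2
          simp only [hψ_def, if_pos hcond, hlo_def, hhi_def,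
            if_pos (⟨hij, hA⟩ : i < j ∧ 0 < A i j), if_pos hx]
          have habs : |lam * A i j * sg (r i - r j)| = lam * A i j := by
            rw [abs_mul, abs_sg, mul_one, abs_of_nonneg (by positivity)]
          constructor
          · have h' := neg_abs_le (lam * A i j * sg (r i - r j))
            rw [habs] at h'; exact h'
          · have h' := le_abs_self (lam * A i j * sg (r i - r j))
            rw [habs] at h'; exact h'
        · simp only [hψ_def, if_neg hcond]
          exact (hKmem φ).1 hφK i j
      -- key identity : lam * TVd = - ∑ r ⬝ div ψ
      have hkey : lam * TVd = - ∑ i, r i * flowDiv A ψ i := by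
        rw [sum_mul_flowDiv]
        have step1 : lam * TVd = ∑ i : Fin n, ∑ j : Fin n,
            lam * (if i < j ∧ 0 < A i j then
              A i j * (if uhat i - uhat j = 0 then |r i - r j|
                else sg (uhat i - uhat j) * (r i - r j))
            else 0) := by
          rw [hTVd_def, Finset.mul_sum]
          exact Finset.sum_congr rfl fun i _ => Finset.mul_sum _ _ _
        rw [step1]
        have hpair : ∀ i j : Fin n,
            lam * (if i < j ∧ 0 < A i j then
              A i j * (if uhat i - uhat j = 0 then |r i - r j|
                else sg (uhat i - uhat j) * (r i - r j))
            else 0)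
            = -(if i < j ∧ 0 < A i j then ψ i j * (r j - r i) else 0) := by
          intro i j
          by_cases hij : i < j ∧ 0 < A i j
          · rw [if_pos hij, if_pos hij]
            by_cases hx : uhat i - uhat j = 0
            · rw [if_pos hx]
              have hψv : ψ i j = lam * A i j * sg (r i - r j) := by
                simp only [hψ_def]; rw [if_pos ⟨hij.1, hij.2, hx⟩]
              rw [hψv]
              linear_combination (-(lam * A i j)) * sg_mul_self (r i - r j)
            · rw [if_neg hx]
              have hψv : ψ i j = lam * A i j * sg (uhat i - uhat j) := by
                simp only [hψ_def]
                rw [if_neg (fun h => hx h.2.2)]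
                exact hforced i j hij.1 hij.2 hx
              rw [hψv]; ring
          · rw [if_neg hij, if_neg hij]; ring
        rw [Finset.sum_congr rfl fun i _ => Finset.sum_congr rfl fun j _ => hpair i j]
        simp only [Finset.sum_neg_distrib]
      have hVIψ := hVI ψ hψK
      have hsplit : ∑ i, r i * flowDiv A ψ i
          = (∑ i, (flowDiv A φ i - c i) * (flowDiv A ψ i - flowDiv A φ i))
            + R + ∑ i, r i * c i := by
        rw [hR_def, ← Finset.sum_add_distrib, ← Finset.sum_add_distrib]
        refine Finset.sum_congr rfl fun i _ => ?_
        simp only [hr_def]; ring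
      have hBr : (∑ i, r i * c i) + lam * TVd ≤ -R := by
        rw [hkey, hsplit]; linarith
      -- quadratic coefficient
      set Q2 : ℝ := (∑ i ∈ S, r i ^ 2 / 2) + ∑ i ∈ Sᶜ, alpha / 2 * r i ^ 2 with hQ2_def
      have hQ2nn : 0 ≤ Q2 := by
        rw [hQ2_def]
        exact add_nonneg (Finset.sum_nonneg fun i _ => by positivity)
          (Finset.sum_nonneg fun i _ => by positivity)
      -- step size
      set g : Fin n × Fin n → ℝ := fun p =>
        if uhat p.1 - uhat p.2 = 0 then 1
        else |uhat p.1 - uhat p.2| / (|r p.1 - r p.2| + 1) with hg_def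
      have hgpos : ∀ p, 0 < g p := by
        intro p
        simp only [hg_def]
        split
        · exact one_pos
        · rename_i hxx
          exact div_pos (abs_pos.2 hxx) (by positivity)
      set t₁ := Finset.univ.inf' hne' g with ht₁_def
      have ht₁ : 0 < t₁ := (Finset.lt_inf'_iff hne').2 fun p _ => hgpos p
      set t := min t₁ (R / (2 * (Q2 + 1))) with ht_def
      have htpos : 0 < t := lt_min ht₁ (div_pos hpos (by linarith))
      have htedge : ∀ i j : Fin n, uhat i - uhat j ≠ 0 →
          t * |r i - r j| ≤ |uhat i - uhat j| := by
        intro i j hx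
        have h1 : t ≤ g (i, j) :=
          le_trans (min_le_left _ _) (Finset.inf'_le _ (mem_univ (i, j)))
        have h2 : g (i, j) = |uhat i - uhat j| / (|r i - r j| + 1) := by
          simp only [hg_def]; rw [if_neg hx]
        have h3 : t * |r i - r j|
            ≤ (|uhat i - uhat j| / (|r i - r j| + 1)) * |r i - r j| := by
          rw [h2] at h1
          exact mul_le_mul_of_nonneg_right h1 (abs_nonneg _)
        have h4 : (|uhat i - uhat j| / (|r i - r j| + 1)) * |r i - r j|
            ≤ |uhat i - uhat j| := by
          rw [div_mul_eq_mul_div, div_le_iff₀ (by positivity)]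
          nlinarith [abs_nonneg (uhat i - uhat j), abs_nonneg (r i - r j)]
        linarith
      set v : Fin n → ℝ := fun i => uhat i + t * r i with hv_def
      -- expansions of the three parts of the objective
      have hSv : ∑ i ∈ S, (1 - v i) ^ 2 / 2
          = (∑ i ∈ S, (1 - uhat i) ^ 2 / 2)
            + t * (∑ i ∈ S, (uhat i - 1) * r i) + t ^ 2 * ∑ i ∈ S, r i ^ 2 / 2 := by
        rw [Finset.mul_sum, Finset.mul_sum, ← Finset.sum_add_distrib,
          ← Finset.sum_add_distrib]
        refine Finset.sum_congr rfl fun i _ => ?_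
        simp only [hv_def]; ring
      have hScv : ∑ i ∈ Sᶜ, alpha / 2 * v i ^ 2
          = (∑ i ∈ Sᶜ, alpha / 2 * uhat i ^ 2)
            + t * (∑ i ∈ Sᶜ, alpha * uhat i * r i)
            + t ^ 2 * ∑ i ∈ Sᶜ, alpha / 2 * r i ^ 2 := by
        rw [Finset.mul_sum, Finset.mul_sum, ← Finset.sum_add_distrib,
          ← Finset.sum_add_distrib]
        refine Finset.sum_congr rfl fun i _ => ?_
        simp only [hv_def]; ring
      have hTVv : graphTV A v = graphTV A uhat + t * TVd := by
        have hpair : ∀ i j : Fin n,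
            (if i < j ∧ 0 < A i j then A i j * |v i - v j| else 0)
            = (if i < j ∧ 0 < A i j then A i j * |uhat i - uhat j| else 0)
              + t * (if i < j ∧ 0 < A i j then
                  A i j * (if uhat i - uhat j = 0 then |r i - r j|
                    else sg (uhat i - uhat j) * (r i - r j))
                else 0) := by
          intro i j
          by_cases hij : i < j ∧ 0 < A i j
          · rw [if_pos hij, if_pos hij, if_pos hij]
            have hy : v i - v j = (uhat i - uhat j) + t * (r i - r j) := by
              simp only [hv_def]; ring
            rw [hy, abs_expansion _ _ _ htpos.le ?_]
            · ring
            · rcases eq_or_ne (uhat i - uhat j) 0 with hx | hx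
              · exact Or.inl hx
              · exact Or.inr (htedge i j hx)
          · rw [if_neg hij, if_neg hij, if_neg hij]; ring
        unfold graphTV
        rw [Finset.sum_congr rfl fun i _ => Finset.sum_congr rfl fun j _ => hpair i j]
        simp only [Finset.sum_add_distrib]
        congr 1
        rw [hTVd_def, Finset.mul_sum]
        exact Finset.sum_congr rfl fun i _ => (Finset.mul_sum _ _ _).symm
      have hcr : (∑ i ∈ S, (uhat i - 1) * r i) + ∑ i ∈ Sᶜ, alpha * uhat i * r i
          = ∑ i, r i * c i := by
        rw [← Finset.sum_add_sum_compl S (fun i => r i * c i)]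
        congr 1
        · refine Finset.sum_congr rfl fun i hiS => ?_
          simp only [hc_def]; rw [if_pos hiS]; ring
        · refine Finset.sum_congr rfl fun i hiS => ?_
          simp only [hc_def]; rw [if_neg (Finset.mem_compl.1 hiS)]; ring
      have hobj : tvObj A S lam alpha v
          = tvObj A S lam alpha uhat + t * ((∑ i, r i * c i) + lam * TVd) + t ^ 2 * Q2 := by
        unfold tvObj
        rw [hSv, hScv, hTVv, hQ2_def]
        linear_combination t * hcr
      have h1 : t * Q2 < R := by
        have h2 : t ≤ R / (2 * (Q2 + 1)) := min_le_right _ _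
        have h3 : t * Q2 ≤ (R / (2 * (Q2 + 1))) * Q2 :=
          mul_le_mul_of_nonneg_right h2 hQ2nn
        have h4 : (R / (2 * (Q2 + 1))) * Q2 < R := by
          rw [div_mul_eq_mul_div, div_lt_iff₀ (by linarith : (0:ℝ) < 2 * (Q2 + 1))]
          nlinarith [hpos, hQ2nn]
        exact lt_of_le_of_lt h3 h4
      have hlt : tvObj A S lam alpha v < tvObj A S lam alpha uhat := by
        rw [hobj]
        have h2 : t * ((∑ i, r i * c i) + lam * TVd) ≤ t * (-R) :=
          mul_le_mul_of_nonneg_left hBr htpos.le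
        have h3 : t ^ 2 * Q2 < t * R := by nlinarith
        linarith
      exact absurd (hmin v) (not_le.2 hlt)
    intro i
    have h := (Finset.sum_eq_zero_iff_of_nonneg fun i _ => sq_nonneg _).1
      (le_antisymm hle hnn) i (mem_univ i)
    have h' : flowDiv A φ i - c i = 0 := by
      have := sq_eq_zero_iff.1 h
      exact this
    linarith
  refine ⟨φ, ?_, ?_, ?_, ?_⟩
  · intro i hiS
    rw [hzero i]
    simp only [hc_def]; rw [if_pos hiS]
  · intro i hiS
    rw [hzero i]
    simp only [hc_def]; rw [if_neg hiS]
  · exact hcap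
  · intro i j hij hA hlt
    by_contra hne
    have hx : uhat i - uhat j ≠ 0 := sub_ne_zero.2 hne
    have heq := hforced i j hij hA hx
    have : |φ i j| = lam * A i j := by
      rw [heq, abs_mul, abs_sg, mul_one, abs_of_nonneg (by positivity)]
    linarith
end

section
/- Let G be a connected finite undirected weighted graph on V = {1,…,n} with n ≥ 1, let the seed set be a single node S = {s}, and suppose λ·A_{ii'} > 1 for every edge {i,i'} ∈ E. Then the unique global minimizer û of the TV-minimization objective f(u) = (1−u_s)²/2 + ∑_{i≠s} (α/2) u_i² + λ‖u‖_TV is a constant vector, namely û_i = 1/(1 + α·(n−1)) for every node i ∈ V. -/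
open Finset
open scoped Classical

/-!
Put `c = 1 / (1 + α (n - 1))`, so that `α (n - 1) c = 1 - c`. Expanding the quadratic part of
the objective around the constant vector `c` leaves the first-order term
`α c ∑_{i ≠ s} (v_i - v_s)`. A simple path from `i` to `s` crosses each edge at most once, so
`|v_i - v_s|` is at most the unweighted total variation of `v`, which is at most `λ‖v‖_TV`
because `λ A_{ii'} > 1` on edges. Summing over the `n - 1` nodes `i ≠ s`, the first-order term is
at least `-(1 - c) λ‖v‖_TV`, so it is absorbed by the TV term, and what is left is a positive
definite quadratic form in `v - c`.
-/

namespace SimpleGraph.Walk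

variable {V : Type*} {G : SimpleGraph V}

theorem abs_sub_le_sum_edges (v : V → ℝ) {f : Sym2 V → ℝ}
    (hf : ∀ x y, G.Adj x y → |v x - v y| ≤ f s(x, y)) {a b : V} (p : G.Walk a b) :
    |v a - v b| ≤ (p.edges.map f).sum := by
  induction p with
  | nil => simp
  | @cons x y z hxy p ih =>
    rw [edges_cons, List.map_cons, List.sum_cons]
    exact (abs_sub_le _ _ _).trans (add_le_add (hf x y hxy) ih)

theorem IsPath.sum_edges_le_sum [Fintype V] {f : Sym2 V → ℝ} (hf : ∀ e, 0 ≤ f e)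
    {a b : V} {p : G.Walk a b} (hp : p.IsPath) :
    (p.edges.map f).sum ≤ ∑ e, f e := by
  rw [← List.sum_toFinset f hp.edges_nodup]
  exact sum_le_univ_sum_of_nonneg hf

end SimpleGraph.Walk

theorem Sym2.sum_inf_sup_le_sum {V : Type*} [LinearOrder V] [Fintype V] {h : V × V → ℝ}
    (hh : ∀ x, 0 ≤ h x) : ∑ e : Sym2 V, h (e.inf, e.sup) ≤ ∑ x, h x := by
  rw [← sum_image fun e _ e' _ he => Sym2.inf_eq_inf_and_sup_eq_sup.mp (Prod.ext_iff.mp he)]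
  exact sum_le_univ_sum_of_nonneg hh

theorem abs_sub_le_sum_of_reflTransGen {V : Type*} [LinearOrder V] [Fintype V]
    {r : V → V → Prop} [DecidableRel r] [Std.Symm r] (v : V → ℝ) {i j : V}
    (h : Relation.ReflTransGen r i j) :
    |v i - v j| ≤ ∑ a, ∑ b, if a < b ∧ r a b then |v a - v b| else 0 := by
  set G := SimpleGraph.fromEdgeSet (Sym2.fromRel (inferInstance : Std.Symm r))
  set h : V × V → ℝ := fun x => if x.1 < x.2 ∧ r x.1 x.2 then |v x.1 - v x.2| else 0
  have hh : ∀ x, 0 ≤ h x := fun x => by positivity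
  have hadj : ∀ x y, G.Adj x y → |v x - v y| ≤ h (s(x, y).inf, s(x, y).sup) := by
    intro x y hxy
    rw [SimpleGraph.fromEdgeSet_adj, Sym2.fromRel_prop] at hxy
    rcases hxy.2.lt_or_gt with hlt | hlt
    · simp [h, hlt.le, hlt, hxy.1]
    · simp [h, hlt.le, hlt, symm_of r hxy.1, abs_sub_comm]
  obtain ⟨w⟩ : G.Reachable i j := by
    rwa [SimpleGraph.reachable_fromEdgeSet_fromRel_eq_reflTransGen]
  -- a path, unlike a walk, uses each edge at most once
  calc |v i - v j| ≤ (w.toPath.1.edges.map fun e => h (e.inf, e.sup)).sum :=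
        w.toPath.1.abs_sub_le_sum_edges v hadj
    _ ≤ ∑ e : Sym2 V, h (e.inf, e.sup) := w.toPath.2.sum_edges_le_sum fun e => hh _
    _ ≤ ∑ x, h x := Sym2.sum_inf_sup_le_sum hh
    _ = _ := Fintype.sum_prod_type h

section TV

variable {n : ℕ} (A : Fin n → Fin n → ℝ)

theorem graphTV_const (c : ℝ) : graphTV A (fun _ => c) = 0 := by
  simp [graphTV]

theorem sum_abs_sub_le_mul_graphTV {lam : ℝ} (hbig : ∀ i j, 0 < A i j → 1 < lam * A i j)
    (v : Fin n → ℝ) :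
    ∑ a, ∑ b, (if a < b ∧ 0 < A a b then |v a - v b| else 0) ≤ lam * graphTV A v := by
  rw [graphTV, mul_sum]
  gcongr with a _
  rw [mul_sum]
  gcongr with b _
  split_ifs with hab
  · rw [← mul_assoc]
    exact le_mul_of_one_le_left (abs_nonneg _) (hbig a b hab.2).le
  · rw [mul_zero]

theorem abs_sub_le_mul_graphTV (hAsymm : ∀ i j, A i j = A j i) {lam : ℝ}
    (hbig : ∀ i j, 0 < A i j → 1 < lam * A i j) (v : Fin n → ℝ) {i j : Fin n}
    (h : Relation.ReflTransGen (fun a b => 0 < A a b) i j) :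
    |v i - v j| ≤ lam * graphTV A v :=
  have : Std.Symm fun a b => 0 < A a b := ⟨fun a b hab => hAsymm a b ▸ hab⟩
  (abs_sub_le_sum_of_reflTransGen v h).trans (sum_abs_sub_le_mul_graphTV A hbig v)

theorem tvObj_singleton_const_add_le (hAsymm : ∀ i j, A i j = A j i) {lam alpha c : ℝ}
    (hbig : ∀ i j, 0 < A i j → 1 < lam * A i j) (halpha : 0 ≤ alpha) (hc0 : 0 ≤ c)
    (hc : alpha * ((n : ℝ) - 1) * c = 1 - c) (s : Fin n)
    (hconn : ∀ i, Relation.ReflTransGen (fun a b => 0 < A a b) i s) (v : Fin n → ℝ) :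
    tvObj A {s} lam alpha (fun _ => c) + ∑ i, (if i = s then 1 else alpha) / 2 * (v i - c) ^ 2
      ≤ tvObj A {s} lam alpha v := by
  set T := lam * graphTV A v
  have hcard : (#({s}ᶜ : Finset (Fin n)) : ℝ) = n - 1 := by
    rw [card_compl, card_singleton, Fintype.card_fin, Nat.cast_sub s.pos, Nat.cast_one]
  -- the case `i = j` of the oscillation bound
  have hT : 0 ≤ T := by
    simpa using abs_sub_le_mul_graphTV A hAsymm hbig v (.refl : Relation.ReflTransGen _ s s)
  have hosc : -∑ i ∈ {s}ᶜ, (v i - v s) ≤ (n - 1) * T := calc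
    _ = ∑ i ∈ {s}ᶜ, -(v i - v s) := (sum_neg_distrib _).symm
    _ ≤ ∑ i ∈ {s}ᶜ, |v i - v s| := sum_le_sum fun i _ => neg_le_abs _
    _ ≤ #({s}ᶜ : Finset (Fin n)) • T :=
      sum_le_card_nsmul _ _ _ fun i _ => abs_sub_le_mul_graphTV A hAsymm hbig v (hconn i)
    _ = _ := by rw [nsmul_eq_mul, hcard]
  have hquad : ∑ i ∈ {s}ᶜ, alpha / 2 * v i ^ 2
      = (n - 1) * (alpha / 2 * c ^ 2 + alpha * c * (v s - c))
        + ∑ i ∈ {s}ᶜ, alpha / 2 * (v i - c) ^ 2 + alpha * c * ∑ i ∈ {s}ᶜ, (v i - v s) := by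
    rw [mul_sum, ← hcard, ← nsmul_eq_mul, ← sum_const, ← sum_add_distrib, ← sum_add_distrib]
    exact sum_congr rfl fun i _ => by ring
  have hgrowth : ∑ i, (if i = s then 1 else alpha) / 2 * (v i - c) ^ 2
      = (v s - c) ^ 2 / 2 + ∑ i ∈ {s}ᶜ, alpha / 2 * (v i - c) ^ 2 := by
    rw [Fintype.sum_eq_add_sum_compl s, if_pos rfl]
    congr 1
    · ring
    · exact sum_congr rfl fun i hi => by rw [if_neg (by simpa using hi)]
  have hlinear : -(alpha * c * ∑ i ∈ {s}ᶜ, (v i - v s)) ≤ (1 - c) * T := calc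
    _ = alpha * c * -∑ i ∈ {s}ᶜ, (v i - v s) := by ring
    _ ≤ alpha * c * ((n - 1) * T) := mul_le_mul_of_nonneg_left hosc (mul_nonneg halpha hc0)
    _ = (1 - c) * T := by rw [← hc]; ring
  simp only [tvObj, sum_singleton, graphTV_const, mul_zero, add_zero]
  rw [sum_const, nsmul_eq_mul, hcard, hgrowth, hquad]
  linear_combination hlinear + mul_nonneg hc0 hT - (v s - c) * hc

end TV

theorem forall_le_and_eq_of_add_le {X : Type*} {f q : X → ℝ} {x₀ : X} (hq : ∀ x, 0 ≤ q x)
    (hq₀ : ∀ x, q x = 0 → x = x₀) (hf : ∀ x, f x₀ + q x ≤ f x) :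
    (∀ x, f x₀ ≤ f x) ∧ ∀ x, (∀ y, f x ≤ f y) → x = x₀ :=
  ⟨fun x => by linarith [hf x, hq x],
    fun x hx => hq₀ x (le_antisymm (by linarith [hf x, hx x₀]) (hq x))⟩

theorem eq_const_of_sum_mul_sq_sub_eq_zero {ι : Type*} [Fintype ι] {w v : ι → ℝ} {c : ℝ}
    (hw : ∀ i, 0 < w i) (h : ∑ i, w i * (v i - c) ^ 2 = 0) : v = fun _ => c := by
  have hterm := (sum_eq_zero_iff_of_nonneg fun i _ => by have := hw i; positivity).mp h
  funext i
  have := hterm i (mem_univ i)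
  rw [mul_eq_zero, or_iff_right (hw i).ne', sq_eq_zero_iff, sub_eq_zero] at this
  exact this

theorem connected_large_lambda_tv_minimizer_general {n : ℕ}
    (A : Fin n → Fin n → ℝ)
    (hAsymm : ∀ i j, A i j = A j i)
    (hconn : ∀ i j : Fin n, Relation.ReflTransGen (fun a b => 0 < A a b) i j)
    (lam alpha : ℝ) (halpha : 0 < alpha)
    (hbig : ∀ i j : Fin n, 0 < A i j → 1 < lam * A i j)
    (s : Fin n)
    (uhat : Fin n → ℝ)
    (huhat : ∀ i : Fin n, uhat i = 1 / (1 + alpha * ((n : ℝ) - 1))) :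
    (∀ v : Fin n → ℝ, tvObj A ({s} : Finset (Fin n)) lam alpha uhat ≤
        tvObj A ({s} : Finset (Fin n)) lam alpha v) ∧
      (∀ u : Fin n → ℝ,
        (∀ v : Fin n → ℝ, tvObj A ({s} : Finset (Fin n)) lam alpha u ≤
          tvObj A ({s} : Finset (Fin n)) lam alpha v) → u = uhat) := by
  have hn : (1 : ℝ) ≤ n := by exact_mod_cast s.pos
  have hden : 0 < 1 + alpha * ((n : ℝ) - 1) := by nlinarith
  set c := 1 / (1 + alpha * ((n : ℝ) - 1))
  have hc : alpha * ((n : ℝ) - 1) * c = 1 - c := by simp only [c]; field_simp; ring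
  obtain rfl : uhat = fun _ => c := funext huhat
  have hw : ∀ i, 0 < (if i = s then 1 else alpha) / 2 := fun i => by split_ifs <;> positivity
  exact forall_le_and_eq_of_add_le (fun v => sum_nonneg fun i _ => by have := hw i; positivity)
    (fun v => eq_const_of_sum_mul_sq_sub_eq_zero hw)
    (tvObj_singleton_const_add_le A hAsymm hbig halpha.le (by positivity) hc s (hconn · s))

/-- for a connected weighted graph on `n ≥ 1` nodes (connectivity:
any two nodes are joined by a path of edges, i.e. by the reflexive-transitive closure
of the adjacency relation `0 < A a b`), a single seed node `s`, and `λ·A_{ii'} > 1`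
on every edge, the constant vector with value `1/(1+α(n−1))` is the unique global
minimizer of the TV-minimization objective. -/
theorem connected_large_lambda_tv_minimizer {n : ℕ} (hn : 1 ≤ n)
    (A : Fin n → Fin n → ℝ)
    (hAsymm : ∀ i j, A i j = A j i) (hAnonneg : ∀ i j, 0 ≤ A i j)
    (hAdiag : ∀ i, A i i = 0)
    (hconn : ∀ i j : Fin n, Relation.ReflTransGen (fun a b => 0 < A a b) i j)
    (lam alpha : ℝ) (hlam : 0 < lam) (halpha : 0 < alpha)
    (hbig : ∀ i j : Fin n, 0 < A i j → 1 < lam * A i j)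
    (s : Fin n)
    (uhat : Fin n → ℝ)
    (huhat : ∀ i : Fin n, uhat i = 1 / (1 + alpha * ((n : ℝ) - 1))) :
    (∀ v : Fin n → ℝ, tvObj A ({s} : Finset (Fin n)) lam alpha uhat ≤
        tvObj A ({s} : Finset (Fin n)) lam alpha v) ∧
      (∀ u : Fin n → ℝ,
        (∀ v : Fin n → ℝ, tvObj A ({s} : Finset (Fin n)) lam alpha u ≤
          tvObj A ({s} : Finset (Fin n)) lam alpha v) → u = uhat) :=
  connected_large_lambda_tv_minimizer_general A hAsymm hconn lam alpha halpha hbig s uhat huhat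
end

section
/- Let A ∈ ℝ^{n×n} be symmetric with nonnegative entries and zero diagonal, let G be the graph on V = {1,…,n} with an edge between i and i' exactly when A_{ii'} > 0, suppose G has exactly k connected components C₁,…,C_k, and let u^{(1)},…,u^{(k)} be any orthonormal basis of the kernel of the graph Laplacian L = D − A. Define the feature vector of node i as x^{(i)} = (u^{(1)}_i,…,u^{(k)}_i)ᵀ ∈ ℝ^k. Then for any two nodes i and j lying in different connected components of G, the feature vectors are orthogonal: ⟨x^{(i)}, x^{(j)}⟩ = 0; moreover, for every node i, ‖x^{(i)}‖² = 1/|C| where C is the connected component containing i (so in particular every feature vector is nonzero). -/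
/-!
A vector in the kernel of `L = D − A` is constant on connected components, because
`2 xᵀ L x = ∑ᵢⱼ Aᵢⱼ (xᵢ − xⱼ)²`. So the `k` orthonormal rows `u⁽ᵃ⁾` lie in the `k`-dimensional
space spanned by the orthonormal indicators `v_C = 1_C / √|C|`, and their coefficient matrix in
that basis is square with orthonormal rows, hence orthogonal. Therefore
`∑ₐ u⁽ᵃ⁾ᵢ u⁽ᵃ⁾ⱼ = ∑_C v_C(i) v_C(j)`, which is `1/|C|` when `i, j ∈ C` and `0` otherwise.
-/

open Finset Matrix

namespace Matrix

theorem transpose_mul_self_eq_of_mul_eq {R l m n : Type*} [CommRing R]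
    [Fintype l] [DecidableEq l] [Fintype m] [DecidableEq m] [Fintype n]
    (e : l ≃ m) (U : Matrix m n R) (V : Matrix l n R)
    (hU : U * Uᵀ = 1) (hUV : U * (Vᵀ * V) = U) : Uᵀ * U = Vᵀ * V := by
  set D := U * Vᵀ
  have hUD : U = D * V := by rw [Matrix.mul_assoc, hUV]
  have hD : Dᵀ * D = 1 := by
    refine (mul_eq_one_comm_of_equiv e.symm).mp ?_
    calc D * Dᵀ = U * (Vᵀ * V) * Uᵀ := by
            simp only [D, transpose_mul, transpose_transpose, Matrix.mul_assoc]
      _ = 1 := by rw [hUV, hU]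
  calc Uᵀ * U = Vᵀ * (Dᵀ * D) * V := by
        rw [hUD, transpose_mul]; simp only [Matrix.mul_assoc]
    _ = Vᵀ * V := by rw [hD, Matrix.mul_one]

section Laplacian

variable {R ι : Type*} [Fintype ι] [DecidableEq ι]

def laplacian [AddCommGroup R] (A : Matrix ι ι R) : Matrix ι ι R :=
  diagonal (fun i => ∑ j, A i j) - A

theorem laplacian_mulVec_apply [CommRing R] (A : Matrix ι ι R) (x : ι → R) (i : ι) :
    (laplacian A *ᵥ x) i = ∑ j, A i j * (x i - x j) := by
  rw [laplacian, sub_mulVec, Pi.sub_apply, mulVec_diagonal, sum_mul, mulVec, dotProduct,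
    ← sum_sub_distrib]
  exact sum_congr rfl fun j _ => by ring

theorem two_mul_dotProduct_laplacian_mulVec [CommRing R] {A : Matrix ι ι R}
    (hA : ∀ i j, A i j = A j i) (x : ι → R) :
    2 * (x ⬝ᵥ (laplacian A *ᵥ x)) = ∑ i, ∑ j, A i j * (x i - x j) ^ 2 := by
  have hswap :
      ∑ i, ∑ j, A i j * (x i - x j) * x j = -∑ i, ∑ j, A i j * (x i - x j) * x i := by
    rw [sum_comm, ← sum_neg_distrib]
    refine sum_congr rfl fun i _ => ?_
    rw [← sum_neg_distrib]
    exact sum_congr rfl fun j _ => by rw [hA]; ring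
  have hquad : x ⬝ᵥ (laplacian A *ᵥ x) = ∑ i, ∑ j, A i j * (x i - x j) * x i := by
    simp only [dotProduct, laplacian_mulVec_apply, mul_sum]
    exact sum_congr rfl fun i _ => sum_congr rfl fun j _ => by ring
  calc 2 * (x ⬝ᵥ (laplacian A *ᵥ x))
      = 2 * ∑ i, ∑ j, A i j * (x i - x j) * x i := by rw [hquad]
    _ = ∑ i, ∑ j, A i j * (x i - x j) * x i - ∑ i, ∑ j, A i j * (x i - x j) * x j := by
        rw [hswap]; ring
    _ = ∑ i, ∑ j, A i j * (x i - x j) ^ 2 := by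
        simp only [← sum_sub_distrib]
        exact sum_congr rfl fun i _ => sum_congr rfl fun j _ => by ring

theorem eq_of_laplacian_mulVec_eq_zero {A : Matrix ι ι ℝ} (hA : ∀ i j, A i j = A j i)
    (hA₀ : ∀ i j, 0 ≤ A i j) {x : ι → ℝ}
    (hx : laplacian A *ᵥ x = 0) {i j : ι} (hij : 0 < A i j) : x i = x j := by
  have hsum := two_mul_dotProduct_laplacian_mulVec hA x
  rw [hx, dotProduct_zero, mul_zero, eq_comm, sum_eq_zero_iff_of_nonneg (fun i _ =>
    sum_nonneg fun j _ => mul_nonneg (hA₀ i j) (sq_nonneg _))] at hsum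
  have hterm := (sum_eq_zero_iff_of_nonneg (fun j _ => mul_nonneg (hA₀ i j) (sq_nonneg _))).mp
    (hsum i (mem_univ i)) j (mem_univ j)
  exact sub_eq_zero.mp <| (pow_eq_zero_iff two_ne_zero).mp <|
    (mul_eq_zero.mp hterm).resolve_left hij.ne'

end Laplacian

section Fibers

variable {ι κ : Type*} [Fintype ι] [DecidableEq κ] (C : ι → κ)

noncomputable def normalizedFiberIndicator : Matrix κ ι ℝ :=
  of fun c i => if C i = c then (√(#{j | C j = c} : ℝ))⁻¹ else 0

theorem transpose_mul_normalizedFiberIndicator_apply [Fintype κ] (i j : ι) :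
    ((normalizedFiberIndicator C)ᵀ * normalizedFiberIndicator C) i j =
      if C i = C j then (#{l | C l = C i} : ℝ)⁻¹ else 0 := by
  simp only [mul_apply, transpose_apply, normalizedFiberIndicator, of_apply, ite_mul, zero_mul,
    mul_ite, mul_zero, sum_ite_eq, mem_univ, if_true]
  split_ifs with h
  · rw [h, ← mul_inv, Real.mul_self_sqrt (Nat.cast_nonneg _)]
  · rfl

theorem mul_transpose_mul_normalizedFiberIndicator [Fintype κ] {m : Type*} (U : Matrix m ι ℝ)
    (hU : ∀ a i j, C i = C j → U a i = U a j) :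
    U * ((normalizedFiberIndicator C)ᵀ * normalizedFiberIndicator C) = U := by
  ext a i
  have hcard : (#{l | C l = C i} : ℝ) ≠ 0 :=
    Nat.cast_ne_zero.mpr (card_ne_zero.mpr ⟨i, by simp⟩)
  calc (U * ((normalizedFiberIndicator C)ᵀ * normalizedFiberIndicator C)) a i
      = ∑ j with C j = C i, U a i * (#{l | C l = C i} : ℝ)⁻¹ := by
        rw [mul_apply, sum_filter]
        refine sum_congr rfl fun j _ => ?_
        rw [transpose_mul_normalizedFiberIndicator_apply]
        split_ifs with h
        · rw [hU a j i h, h]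
        · rw [mul_zero]
    _ = U a i := by rw [sum_const, nsmul_eq_mul]; field_simp

end Fibers

end Matrix

theorem SimpleGraph.Reachable.apply_eq_of_forall_adj {V α : Type*} {G : SimpleGraph V}
    {f : V → α} (hf : ∀ v w, G.Adj v w → f v = f w) {v w : V} (h : G.Reachable v w) :
    f v = f w := by
  obtain ⟨p⟩ := h
  induction p with
  | nil => rfl
  | cons hadj _ ih => exact (hf _ _ hadj).trans ih

theorem feature_vectors_orthogonal_across_components_general {n k : ℕ}
    (A : Matrix (Fin n) (Fin n) ℝ)
    (hAsymm : ∀ i j, A i j = A j i) (hAnonneg : ∀ i j, 0 ≤ A i j)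
    (G : SimpleGraph (Fin n)) (hG : ∀ i j, G.Adj i j ↔ 0 < A i j)
    (hk : Nat.card G.ConnectedComponent = k)
    (u : Fin k → (Fin n → ℝ))
    (hker : ∀ a : Fin k, u a ∈ LinearMap.ker
      (Matrix.toLin' (Matrix.diagonal (fun i => ∑ j, A i j) - A)))
    (horth : ∀ a b : Fin k, ∑ i : Fin n, u a i * u b i =
      if a = b then (1 : ℝ) else 0) :
    (∀ i j : Fin n, ¬ G.Reachable i j →
        ∑ a : Fin k, u a i * u a j = 0) ∧
      (∀ i : Fin n, ∑ a : Fin k, (u a i) ^ 2 =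
        1 / (Nat.card {j : Fin n // G.Reachable i j} : ℝ)) ∧
      (∀ i : Fin n, (fun a : Fin k => u a i) ≠ 0) := by
  classical
  set C := G.connectedComponentMk
  have hconst : ∀ a i j, C i = C j → u a i = u a j := fun a i j h =>
    (SimpleGraph.ConnectedComponent.eq.mp h).apply_eq_of_forall_adj fun v w hvw =>
      eq_of_laplacian_mulVec_eq_zero hAsymm hAnonneg (hker a) ((hG v w).mp hvw)
  have hgram : (of u)ᵀ * of u =
      (normalizedFiberIndicator C)ᵀ * normalizedFiberIndicator C := by
    refine transpose_mul_self_eq_of_mul_eq (Finite.equivFinOfCardEq hk) _ _ ?_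
      (mul_transpose_mul_normalizedFiberIndicator C _ hconst)
    ext a b
    simpa [mul_apply, one_apply] using horth a b
  have hfeature (i j : Fin n) : ∑ a, u a i * u a j =
      if G.Reachable i j then (Nat.card {l // G.Reachable i l} : ℝ)⁻¹ else 0 := by
    have hcard : #{l | C l = C i} = Nat.card {l // G.Reachable i l} := by
      rw [Nat.card_eq_fintype_card, Fintype.card_subtype]
      exact congrArg card <| filter_congr fun l _ => by
        rw [SimpleGraph.ConnectedComponent.eq, SimpleGraph.reachable_comm]
    calc ∑ a, u a i * u a j = ((of u)ᵀ * of u) i j := by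
          simp only [mul_apply, transpose_apply, of_apply]
      _ = _ := by
        rw [hgram, transpose_mul_normalizedFiberIndicator_apply, hcard]
        simp only [C, SimpleGraph.ConnectedComponent.eq]
  have hnorm (i : Fin n) : ∑ a, u a i ^ 2 = 1 / (Nat.card {j // G.Reachable i j} : ℝ) := by
    simpa [sq] using hfeature i i
  refine ⟨fun i j hij => by simpa [hij] using hfeature i j, hnorm, fun i hi => ?_⟩
  have hpos : (0 : ℝ) < Nat.card {j // G.Reachable i j} := by
    have : Nonempty {j // G.Reachable i j} := ⟨⟨i, .refl i⟩⟩
    exact_mod_cast Nat.card_pos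
  have hzero : ∑ a, u a i ^ 2 = 0 := by simp [funext_iff.mp hi]
  exact (one_div_pos.mpr hpos).ne' (hnorm i ▸ hzero)

/-- let `G` (edges exactly where `A_{ii'} > 0`) have exactly `k`
connected components, and let `u 0, …, u (k-1)` be an orthonormal basis of the kernel
of the graph Laplacian `L = D − A` (orthonormal for the standard inner product, with
span equal to the kernel), with feature vectors `x^{(i)} = (u 0 i, …, u (k-1) i)`.
Then feature vectors of nodes in different connected components are orthogonal, every
node's feature vector has squared norm `1/|C|` where `C` is the node's connected
component, and in particular every feature vector is nonzero. -/
theorem feature_vectors_orthogonal_across_components {n k : ℕ}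
    (A : Matrix (Fin n) (Fin n) ℝ)
    (hAsymm : ∀ i j, A i j = A j i) (hAnonneg : ∀ i j, 0 ≤ A i j)
    (hAdiag : ∀ i, A i i = 0)
    (G : SimpleGraph (Fin n)) (hG : ∀ i j, G.Adj i j ↔ 0 < A i j)
    (hk : Nat.card G.ConnectedComponent = k)
    (u : Fin k → (Fin n → ℝ))
    (hker : ∀ a : Fin k, u a ∈ LinearMap.ker
      (Matrix.toLin' (Matrix.diagonal (fun i => ∑ j, A i j) - A)))
    (hspan : Submodule.span ℝ (Set.range u) = LinearMap.ker
      (Matrix.toLin' (Matrix.diagonal (fun i => ∑ j, A i j) - A)))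
    (horth : ∀ a b : Fin k, ∑ i : Fin n, u a i * u b i =
      if a = b then (1 : ℝ) else 0) :
    (∀ i j : Fin n, ¬ G.Reachable i j →
        ∑ a : Fin k, u a i * u a j = 0) ∧
      (∀ i : Fin n, ∑ a : Fin k, (u a i) ^ 2 =
        1 / (Nat.card {j : Fin n // G.Reachable i j} : ℝ)) ∧
      (∀ i : Fin n, (fun a : Fin k => u a i) ≠ 0) :=
  feature_vectors_orthogonal_across_components_general A hAsymm hAnonneg G hG hk u hker horth
end
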